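/- If an ordering o of the vertices of G has a weakly reducible maximum witnessed by indices i, j, k with k ≤ i (i.e., s_{i,k} > 0 and s_{i,k} − s_{i,i+1} − 2a_{k,i+1} > 0, with no local maxima or minima strictly between k and i), then shifting vertex k to position i+1 produces an ordering o′ with w(o′) < w(o) in lexicographic order. -/

import Mathlib

/-!
With positions counted from 0, shifting `v_k` to position `i` leaves `A_m` unchanged for
`m ≤ k` and `m > i`, and for `k < m ≤ i` turns it into `A_{m+1} \ {v_k}`, of width
`b_{m+1} - s_{m+1,k}`. The slope of a fixed vertex can only drop as the level set grows, and `b`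
is nondecreasing on `(k, i]`, so for `m < i` this width is at most `b_i - s_{i,k} < b_i`; at
`m = i` it is `b_i + s_{i,i} - s_{i,k} + 2a_{k,i} < b_i`. Thus the multiset of widths trades
the value `b_i` for strictly smaller values only, and the non-increasingly sorted lists first
differ in favour of the shifted ordering.
-/

open Finset

variable {V : Type*} [Fintype V] [DecidableEq V]

/-- The total weight of the boundary of `A`: the sum of the weights of the
edges with exactly one endpoint in `A`. -/
def boundarySize (w : V → V → ℝ) (A : Finset V) : ℝ :=
  ∑ u ∈ A, ∑ x ∈ Aᶜ, w u x

/-- The pinchSlope of a vertex `v` with respect to a vertex set `A`: the total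
weight of the edges from `v` to the complement of `A` minus the total weight
of the edges from `v` to `A`. -/
def pinchSlope (w : V → V → ℝ) (A : Finset V) (v : V) : ℝ :=
  ∑ x ∈ Aᶜ, w v x - ∑ x ∈ A, w v x

/-- `A` is pinch convex: for any sequence of vertices outside of `A`, if adding
all of them to `A` strictly decreases the boundary, then adding some proper
initial segment strictly increases the boundary. -/
def PinchConvex (w : V → V → ℝ) (A : Finset V) : Prop :=
  ∀ L : List V, (∀ x ∈ L, x ∉ A) →
    boundarySize w (A ∪ L.toFinset) < boundarySize w A →
    ∃ k < L.length, boundarySize w A < boundarySize w (A ∪ (L.take k).toFinset)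

/-- `A` is pinch concave: for any sequence of vertices of `A`, if removing
all of them from `A` strictly decreases the boundary, then removing some proper
initial segment strictly increases the boundary. -/
def PinchConcave (w : V → V → ℝ) (A : Finset V) : Prop :=
  ∀ L : List V, (∀ x ∈ L, x ∈ A) →
    boundarySize w (A \ L.toFinset) < boundarySize w A →
    ∃ k < L.length, boundarySize w A < boundarySize w (A \ (L.take k).toFinset)

/-- `A` is a pinch cluster: whenever adding a sequence of vertices to `A`, or
removing a sequence of vertices from `A`, strictly decreases the boundary, some
proper initial segment of the sequence strictly increases the boundary. -/
def PinchCluster (w : V → V → ℝ) (A : Finset V) : Prop :=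
  (∀ L : List V,
    boundarySize w (A ∪ L.toFinset) < boundarySize w A →
    ∃ k < L.length, boundarySize w A < boundarySize w (A ∪ (L.take k).toFinset)) ∧
  (∀ L : List V,
    boundarySize w (A \ L.toFinset) < boundarySize w A →
    ∃ k < L.length, boundarySize w A < boundarySize w (A \ (L.take k).toFinset))

/-- The vertex in (0-indexed) position `n` of the ordering `o`. -/
def vert {N : ℕ} [NeZero N] (o : Fin N ≃ V) (n : ℕ) : V := o (Fin.ofNat N n)

/-- `A_i`: the set of the first `i` vertices of the ordering `o`. -/
def levelSet {N : ℕ} (o : Fin N ≃ V) (i : ℕ) : Finset V :=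
  Finset.univ.filter fun x => (o.symm x : ℕ) < i

/-- `b_i`: the width of the ordering `o` at level `i`. -/
def levelWidth (w : V → V → ℝ) {N : ℕ} (o : Fin N ≃ V) (i : ℕ) : ℝ :=
  boundarySize w (levelSet o i)

/-- `s_{i,j}` (with `j` 0-indexed): the pinchSlope of the vertex in position `j`
with respect to the set `A_i` of the first `i` vertices. -/
def sl (w : V → V → ℝ) {N : ℕ} [NeZero N] (o : Fin N ≃ V) (i j : ℕ) : ℝ :=
  pinchSlope w (levelSet o i) (vert o j)

/-- The width of an ordering: the list of all the level widths, rearranged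
in non-increasing order (compared lexicographically). -/
noncomputable def widthList (w : V → V → ℝ) {N : ℕ} (o : Fin N ≃ V) : List ℝ :=
  ((List.range (N + 1)).map (levelWidth w o)).insertionSort (· ≥ ·)

/-- `[p,q]` is a locally minimal flat of the ordering `o`. -/
def IsMinimalFlat (w : V → V → ℝ) {N : ℕ} (o : Fin N ≃ V) (p q : ℕ) : Prop :=
  0 < p ∧ p ≤ q ∧ q < N ∧
  (∀ r, p ≤ r → r ≤ q → levelWidth w o r = levelWidth w o p) ∧
  levelWidth w o p < levelWidth w o (p - 1) ∧
  levelWidth w o p < levelWidth w o (q + 1)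

/-- `[p,q]` is a locally maximal flat of the ordering `o`. -/
def IsMaximalFlat (w : V → V → ℝ) {N : ℕ} (o : Fin N ≃ V) (p q : ℕ) : Prop :=
  0 < p ∧ p ≤ q ∧ q < N ∧
  (∀ r, p ≤ r → r ≤ q → levelWidth w o r = levelWidth w o p) ∧
  levelWidth w o (p - 1) < levelWidth w o p ∧
  levelWidth w o (q + 1) < levelWidth w o p

/-- `m` is a local minimum: it lies in a locally minimal flat. -/
def IsLocalMinLevel (w : V → V → ℝ) {N : ℕ} (o : Fin N ≃ V) (m : ℕ) : Prop :=
  ∃ p q, IsMinimalFlat w o p q ∧ p ≤ m ∧ m ≤ q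

/-- The locally maximal flat `[i,j]` is weakly reducible.  Here `jm` is the
right end of the preceding minimal flat and `ip` the left end of the following
minimal flat, with no local minima strictly in between; the witness index `k`
(0-indexed vertex position, so paper index `k+1`) satisfies condition (1) or
condition (2) of the definition. -/
def WeaklyReducibleAt (w : V → V → ℝ) {N : ℕ} [NeZero N] (o : Fin N ≃ V) (i j : ℕ) : Prop :=
  ∃ jm ip : ℕ,
    (∃ im, IsMinimalFlat w o im jm) ∧ (∃ jp, IsMinimalFlat w o ip jp) ∧
    jm < i ∧ j < ip ∧
    (∀ m, jm < m → m < ip → ¬ IsLocalMinLevel w o m) ∧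
    ∃ k, jm ≤ k ∧ k < ip ∧
      ((k < i ∧ 0 < sl w o i k ∧
          0 < sl w o i k - sl w o i i - 2 * w (vert o k) (vert o i)) ∨
       (j ≤ k ∧ sl w o j k < 0 ∧
          0 < -(sl w o j k) + sl w o j (j - 1) - 2 * w (vert o k) (vert o (j - 1))))

/-- An ordering is strongly irreducible if none of its locally maximal flats
is weakly reducible. -/
def StronglyIrreducible (w : V → V → ℝ) {N : ℕ} [NeZero N] (o : Fin N ≃ V) : Prop :=
  ∀ i j, IsMaximalFlat w o i j → ¬ WeaklyReducibleAt w o i j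

theorem List.lex_lt_of_pairwise_ge {α : Type*} [LinearOrder α] {l₁ l₂ : List α}
    (h₁ : l₁.Pairwise (· ≥ ·)) (h₂ : l₂.Pairwise (· ≥ ·)) {C S S' : Multiset α}
    (e₁ : (l₁ : Multiset α) = C + S') (e₂ : (l₂ : Multiset α) = C + S) {a : α} (ha : a ∈ S)
    (hS' : ∀ x ∈ S', x < a) : List.Lex (· < ·) l₁ l₂ := by
  induction l₂ generalizing l₁ C with
  | nil =>
    have : a ∈ (([] : List α) : Multiset α) := e₂ ▸ Multiset.mem_add.2 (.inr ha)
    simp at this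
  | cons b t₂ ih =>
    have le_b : ∀ x ∈ C + S, x ≤ b := by
      intro x hx
      rw [← e₂, Multiset.mem_coe, List.mem_cons] at hx
      rcases hx with rfl | hx
      exacts [le_rfl, (List.pairwise_cons.1 h₂).1 x hx]
    have hab : a ≤ b := le_b a (Multiset.mem_add.2 (.inr ha))
    rcases l₁ with _ | ⟨c, t₁⟩
    · exact .nil
    · have hc : c ∈ C + S' := e₁ ▸ Multiset.mem_coe.2 List.mem_cons_self
      have hcC : c ∈ C → c ≤ b := fun h => le_b c (Multiset.mem_add.2 (.inl h))
      rcases Multiset.mem_add.1 hc with hc | hc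
      · rcases (hcC hc).lt_or_eq with hcb | rfl
        · exact .rel hcb
        · refine .cons (ih (C := C.erase c) (List.pairwise_cons.1 h₁).2
            (List.pairwise_cons.1 h₂).2 ?_ ?_) <;>
          · refine (Multiset.cons_inj_right c).1 ?_
            rw [← Multiset.cons_add, Multiset.cons_erase hc, Multiset.cons_coe]
            assumption
      · exact .rel ((hS' c hc).trans_le hab)

theorem List.lex_insertionSort_map_lt {ι α : Type*} [LinearOrder α] (l : List ι) {f g : ι → α}
    (P : ι → Prop) [DecidablePred P] (hfg : ∀ m ∈ l, ¬ P m → g m = f m) {a : ι} (ha : a ∈ l)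
    (hPa : P a) (hlt : ∀ m ∈ l, P m → g m < f a) :
    List.Lex (· < ·) ((l.map g).insertionSort (· ≥ ·)) ((l.map f).insertionSort (· ≥ ·)) := by
  have split (h : ι → α) : (((l.map h).insertionSort (· ≥ ·) : List α) : Multiset α) =
      ((l : Multiset ι).filter (¬ P ·)).map h + ((l : Multiset ι).filter P).map h := by
    rw [Multiset.coe_eq_coe.2 (List.perm_insertionSort _ _), ← Multiset.map_coe,
      ← Multiset.map_add, add_comm, Multiset.filter_add_not]
  have common :
      ((l : Multiset ι).filter (¬ P ·)).map g = ((l : Multiset ι).filter (¬ P ·)).map f :=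
    Multiset.map_congr rfl fun m hm => (Multiset.mem_filter.1 hm).elim (hfg m)
  refine List.lex_lt_of_pairwise_ge (List.pairwise_insertionSort _ _)
    (List.pairwise_insertionSort _ _) (common ▸ split g) (split f) (a := f a)
    (Multiset.mem_map_of_mem f (Multiset.mem_filter.2 ⟨ha, hPa⟩)) ?_
  simp only [Multiset.mem_map, Multiset.mem_filter, Multiset.mem_coe]
  rintro _ ⟨m, ⟨hm, hPm⟩, rfl⟩
  exact hlt m hm hPm

section Boundary

variable (w : V → V → ℝ) {A : Finset V} {v : V}

theorem boundarySize_insert (hsym : ∀ u v, w u v = w v u) (hv : v ∉ A) :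
    boundarySize w (insert v A) = boundarySize w A + pinchSlope w A v - w v v := by
  have hvc : v ∈ Aᶜ := mem_compl.2 hv
  unfold boundarySize pinchSlope
  rw [sum_insert hv, compl_insert, sum_erase_eq_sub hvc,
    sum_congr rfl fun u _ => sum_erase_eq_sub (f := w u) hvc, sum_sub_distrib,
    sum_congr rfl fun u _ => hsym u v]
  ring

theorem pinchSlope_insert (hv : v ∉ A) (u : V) :
    pinchSlope w (insert v A) u = pinchSlope w A u - 2 * w u v := by
  unfold pinchSlope
  rw [compl_insert, sum_erase_eq_sub (mem_compl.2 hv), sum_insert hv]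
  ring

theorem boundarySize_erase (hsym : ∀ u v, w u v = w v u) (hv : v ∈ A) :
    boundarySize w (A.erase v) = boundarySize w A - pinchSlope w A v - w v v := by
  have h := boundarySize_insert w hsym (notMem_erase v A)
  rw [insert_erase hv] at h
  have h' := pinchSlope_insert w (notMem_erase v A) v
  rw [insert_erase hv] at h'
  linarith

end Boundary

section Positions

variable {α : Type*} {N : ℕ} [NeZero N] (o : Fin N ≃ α)

theorem vert_eq_apply {n : ℕ} (p : Fin N) (hp : (p : ℕ) = n) : vert o n = o p := by
  subst hp; simp [vert]

theorem eq_vert_iff {x : α} {n : ℕ} (hn : n < N) : x = vert o n ↔ (o.symm x : ℕ) = n := by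
  rw [vert, ← Equiv.symm_apply_eq, Fin.ext_iff, Fin.val_ofNat, Nat.mod_eq_of_lt hn]

end Positions

section LevelSets

variable {α : Type*} [Fintype α] {N : ℕ} (o : Fin N ≃ α)

theorem mem_levelSet {x : α} {m : ℕ} : x ∈ levelSet o m ↔ (o.symm x : ℕ) < m := by
  simp [levelSet]

theorem levelSet_eq_univ {m : ℕ} (hm : N ≤ m) : levelSet o m = univ := by
  ext x
  simp only [mem_levelSet, mem_univ, iff_true]
  omega

theorem vert_notMem_levelSet [NeZero N] {m : ℕ} (hm : m < N) : vert o m ∉ levelSet o m := by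
  rw [mem_levelSet, (eq_vert_iff o hm).1 rfl]
  exact lt_irrefl m

end LevelSets

section Widths

variable {N : ℕ} [NeZero N] {o : Fin N ≃ V}

theorem levelSet_succ {m : ℕ} (hm : m < N) :
    levelSet o (m + 1) = insert (vert o m) (levelSet o m) := by
  ext x
  rw [mem_insert, mem_levelSet, mem_levelSet, eq_vert_iff o hm]
  omega

variable (w : V → V → ℝ)

theorem levelWidth_succ (hsym : ∀ u v, w u v = w v u) (hdiag : ∀ v, w v v = 0) {m : ℕ}
    (hm : m < N) : levelWidth w o (m + 1) = levelWidth w o m + sl w o m m := by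
  rw [levelWidth, levelSet_succ hm, boundarySize_insert w hsym (vert_notMem_levelSet o hm),
    hdiag, sub_zero, levelWidth, sl]

theorem sl_succ {m : ℕ} (hm : m < N) (j : ℕ) :
    sl w o (m + 1) j = sl w o m j - 2 * w (vert o j) (vert o m) := by
  rw [sl, levelSet_succ hm, pinchSlope_insert w (vert_notMem_levelSet o hm), sl]

theorem sl_antitone (hw0 : ∀ u v, 0 ≤ w u v) (j : ℕ) : Antitone (sl w o · j) := by
  refine antitone_nat_of_succ_le fun m => ?_
  rcases lt_or_ge m N with hm | hm
  · rw [sl_succ w hm]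
    linarith [hw0 (vert o j) (vert o m)]
  · rw [sl, sl, levelSet_eq_univ o hm, levelSet_eq_univ o (hm.trans m.le_succ)]

theorem levelWidth_le_of_sl_nonneg (hsym : ∀ u v, w u v = w v u) (hdiag : ∀ v, w v v = 0)
    {a b : ℕ} (hbN : b ≤ N) (hsl : ∀ p, a ≤ p → p < b → 0 ≤ sl w o p p) {m n : ℕ} (ham : a ≤ m)
    (hmn : m ≤ n) (hnb : n ≤ b) : levelWidth w o m ≤ levelWidth w o n := by
  induction n, hmn using Nat.le_induction with
  | base => exact le_rfl
  | succ n hmn ih =>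
    rw [levelWidth_succ w hsym hdiag (by omega)]
    linarith [ih (by omega), hsl n (by omega) (by omega)]

end Widths

/-- New position, after shifting the vertex in position `k` to position `i`, of the vertex
in position `p`. -/
def shiftPos (k i p : ℕ) : ℕ :=
  if p < k then p else if p = k then i else if p ≤ i then p - 1 else p

section Shift

variable {α : Type*} {N : ℕ} [NeZero N] {o o' : Fin N ≃ α} {k i : ℕ}

theorem val_symm_eq_shiftPos (hiN : i < N) (ho'1 : ∀ p : Fin N, (p : ℕ) < k → o' p = o p)
    (ho'2 : ∀ p : Fin N, k ≤ (p : ℕ) → (p : ℕ) < i → o' p = vert o ((p : ℕ) + 1))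
    (ho'3 : vert o' i = vert o k) (ho'4 : ∀ p : Fin N, i < (p : ℕ) → o' p = o p) (x : α) :
    (o'.symm x : ℕ) = shiftPos k i (o.symm x) := by
  obtain ⟨p, rfl⟩ := o.surjective x
  rw [o.symm_apply_apply, shiftPos]
  split_ifs with hpk hpk' hpi
  · rw [o'.symm_apply_eq.2 (ho'1 p hpk).symm]
  · rw [(eq_vert_iff o' hiN).1 (by rw [ho'3, vert_eq_apply o p hpk'])]
  · have hp : o' ⟨p - 1, by omega⟩ = o p := by
      rw [ho'2 _ (by dsimp only; omega) (by dsimp only; omega),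
        vert_eq_apply o p (by dsimp only; omega)]
    rw [o'.symm_apply_eq.2 hp.symm]
  · rw [o'.symm_apply_eq.2 (ho'4 p (by omega)).symm]

end Shift

section ShiftedLevelSets

variable {α : Type*} [Fintype α] {N : ℕ} {o o' : Fin N ≃ α} {k i m : ℕ}

theorem levelSet_eq_of_shiftPos (hpos : ∀ x, (o'.symm x : ℕ) = shiftPos k i (o.symm x))
    (hki : k ≤ i) (hm : ¬(k < m ∧ m ≤ i)) : levelSet o' m = levelSet o m := by
  ext x
  rw [mem_levelSet, mem_levelSet, hpos, shiftPos]
  split_ifs <;> omega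

theorem levelSet_eq_erase_of_shiftPos [NeZero N] [DecidableEq α]
    (hpos : ∀ x, (o'.symm x : ℕ) = shiftPos k i (o.symm x)) (hkN : k < N) (hkm : k < m)
    (hmi : m ≤ i) : levelSet o' m = (levelSet o (m + 1)).erase (vert o k) := by
  ext x
  rw [mem_erase, mem_levelSet, mem_levelSet, hpos, ne_eq, eq_vert_iff o hkN, shiftPos]
  split_ifs <;> omega

end ShiftedLevelSets

theorem levelWidth_eq_sub_sl_of_shiftPos (w : V → V → ℝ) (hsym : ∀ u v, w u v = w v u)
    (hdiag : ∀ v, w v v = 0) {N : ℕ} [NeZero N] {o o' : Fin N ≃ V} {k i m : ℕ}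
    (hpos : ∀ x, (o'.symm x : ℕ) = shiftPos k i (o.symm x)) (hkN : k < N) (hkm : k < m)
    (hmi : m ≤ i) : levelWidth w o' m = levelWidth w o (m + 1) - sl w o (m + 1) k := by
  have hk : vert o k ∈ levelSet o (m + 1) := by
    rw [mem_levelSet, (eq_vert_iff o hkN).1 rfl]
    omega
  rw [levelWidth, levelSet_eq_erase_of_shiftPos hpos hkN hkm hmi,
    boundarySize_erase w hsym hk, hdiag, sub_zero, levelWidth, sl]

/-- Lemma (strongmaxlem), case `k ≤ i` (stated 0-indexed, so the witness vertex
is in position `k < i`): if `s_{i,k} > 0`, `s_{i,k} - s_{i,i+1} - 2a_{k,i+1} > 0`,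
and there are no local minima or maxima strictly between `k` and `i` (all the
intermediate slopes are nonnegative), then shifting the vertex in position `k`
to position `i` produces an ordering `o'` of strictly smaller width in
lexicographic order. -/
theorem width_lt_of_weakly_reducible_shift (w : V → V → ℝ)
    (hw0 : ∀ u v, 0 ≤ w u v) (hsym : ∀ u v, w u v = w v u)
    (hdiag : ∀ v, w v v = 0) {N : ℕ} [NeZero N] (o o' : Fin N ≃ V)
    (k i : ℕ) (hki : k < i) (hiN : i < N)
    (hnomin : ∀ p, k < p → p < i → 0 ≤ sl w o p p)
    (hs1 : 0 < sl w o i k)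
    (hs2 : 0 < sl w o i k - sl w o i i - 2 * w (vert o k) (vert o i))
    (ho'1 : ∀ p : Fin N, (p : ℕ) < k → o' p = o p)
    (ho'2 : ∀ p : Fin N, k ≤ (p : ℕ) → (p : ℕ) < i → o' p = vert o ((p : ℕ) + 1))
    (ho'3 : vert o' i = vert o k)
    (ho'4 : ∀ p : Fin N, i < (p : ℕ) → o' p = o p) :
    List.Lex (· < ·) (widthList w o') (widthList w o) := by
  have hpos := val_symm_eq_shiftPos hiN ho'1 ho'2 ho'3 ho'4
  have hlt : ∀ m, k < m → m ≤ i → levelWidth w o' m < levelWidth w o i := by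
    intro m hkm hmi
    rw [levelWidth_eq_sub_sl_of_shiftPos w hsym hdiag hpos (hki.trans hiN) hkm hmi]
    rcases hmi.lt_or_eq with hmi | rfl
    · have hb := levelWidth_le_of_sl_nonneg w hsym hdiag hiN.le hnomin (by omega) hmi le_rfl
      have hs : sl w o i k ≤ sl w o (m + 1) k := sl_antitone w hw0 k hmi
      linarith
    · rw [sl_succ w hiN, levelWidth_succ w hsym hdiag hiN]
      linarith
  refine List.lex_insertionSort_map_lt _ (fun m => k < m ∧ m ≤ i) (fun m _ hm => ?_)
    (List.mem_range.2 (by omega : i < N + 1)) ⟨hki, le_rfl⟩ fun m _ hm => hlt m hm.1 hm.2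
  rw [levelWidth, levelWidth, levelSet_eq_of_shiftPos hpos hki.le hm]
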